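/- arXiv:2203.08859 — 2 statements merged into one kernel-verified Lean document; each statement's English description precedes it below -/
import Mathlib

section
/- Under the stated assumptions, for every 0 ≤ m < n the σ-algebras F_m and σ(Y) are independent under the measure \tilde P_m, and moreover for every A ∈ F_m and every B ⊆ E one has \tilde P_m[A ∩ {Y ∈ B}] = P[A] · P[Y ∈ B] = \tilde P_m[A] · \tilde P_m[Y ∈ B]. -/
open MeasureTheory Filter Set

/-- The conditional density `η_m^y = P[Y = y | ℱ m] / P[Y = y]` of the signal `Y`
with respect to the filtration `ℱ`. -/
noncomputable def condDensity {Ω E : Type*} {mΩ : MeasurableSpace Ω}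
    (P : Measure Ω) (ℱ : ℕ → MeasurableSpace Ω) (Y : Ω → E) (m : ℕ) (y : E) : Ω → ℝ :=
  fun ω =>
    (P[Set.indicator {ω' | Y ω' = y} (fun _ => (1 : ℝ)) | ℱ m]) ω / (P {ω' | Y ω' = y}).toReal

/-- The `[0,m]`-martingale preserving measure `d\tilde P_m = (1/η_m^{Y}) dP`. -/
noncomputable def mpMeasure {Ω E : Type*} {mΩ : MeasurableSpace Ω}
    (P : Measure Ω) (ℱ : ℕ → MeasurableSpace Ω) (Y : Ω → E) (m : ℕ) : Measure Ω :=
  P.withDensity fun ω => ENNReal.ofReal (condDensity P ℱ Y m (Y ω) ω)⁻¹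

/-!
Fix an atom `{Y = y}` and `A ∈ ℱ m`. On the atom the density of `\tilde P_m` is `1/η_m^y`, which
is `ℱ m`-measurable, so integrating `1_A/η_m^y` against `1_{Y = y}` is the same as integrating it
against `P[Y = y | ℱ m] = η_m^y · P[Y = y]`; the factors `η_m^y` cancel and
`\tilde P_m[A ∩ {Y = y}] = P[A] · P[Y = y]`. Working with `ℝ≥0∞`-valued integrals and the Lebesgue
conditional expectation `P⁻[·|ℱ m]` makes this pull-out step free of integrability conditions on
`1/η_m^y`. Summing over the countably many atoms gives the product formula, and taking `B = E` or
`A = Ω` identifies the marginals of `\tilde P_m` with those of `P`.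
-/

open scoped ENNReal

namespace MeasureTheory

variable {Ω : Type*} {m m₀ : MeasurableSpace Ω} {P : Measure[m₀] Ω}

theorem lintegral_mul_condLExp (hm : m ≤ m₀) [SigmaFinite (P.trim hm)] {f X : Ω → ℝ≥0∞}
    (hf : Measurable[m] f) (hX : Measurable X) :
    ∫⁻ ω, f ω * P⁻[X|m] ω ∂P = ∫⁻ ω, f ω * X ω ∂P := by
  have htrim : (P.withDensity P⁻[X|m]).trim hm = (P.withDensity X).trim hm := by
    refine @Measure.ext _ m _ _ fun s hs => ?_
    rw [trim_measurableSet_eq hm hs, trim_measurableSet_eq hm hs, withDensity_apply _ (hm s hs),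
      withDensity_apply _ (hm s hs), setLIntegral_condLExp hm _ _ hs]
  have hf₀ : Measurable f := hf.mono hm le_rfl
  simp_rw [mul_comm (f _)]
  rw [← Pi.mul_def, ← Pi.mul_def,
    ← lintegral_withDensity_eq_lintegral_mul _ (measurable_condLExp' m P X) hf₀,
    ← lintegral_withDensity_eq_lintegral_mul _ hX hf₀, ← lintegral_trim hm hf, htrim,
    lintegral_trim hm hf]

theorem condLExp_indicator_one_ae_eq [IsFiniteMeasure P] {s : Set Ω} (hs : MeasurableSet s) :
    P⁻[s.indicator 1|m] =ᵐ[P]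
      fun ω => ENNReal.ofReal (P[s.indicator (fun _ => (1 : ℝ))|m] ω) := by
  have hofReal : (fun ω => ENNReal.ofReal (s.indicator (fun _ => (1 : ℝ)) ω)) = s.indicator 1 := by
    ext ω
    by_cases hω : ω ∈ s <;> simp [hω]
  rw [← hofReal]
  exact condLExp_ofReal m ((integrable_const 1).indicator hs) (ae_of_all _ fun ω => by
    by_cases hω : ω ∈ s <;> simp [hω])

end MeasureTheory

theorem measure_inter_preimage_eq_mul_of_fiber {Ω E : Type*} [MeasurableSpace Ω]
    [MeasurableSpace E] [MeasurableSingletonClass E] [Countable E] {μ ν : Measure Ω}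
    {Y : Ω → E} (hY : Measurable Y) {A : Set Ω} {c : ℝ≥0∞}
    (h : ∀ y ∈ range Y, μ (A ∩ Y ⁻¹' {y}) = c * ν (Y ⁻¹' {y})) (B : Set E) :
    μ (A ∩ Y ⁻¹' B) = c * ν (Y ⁻¹' B) := by
  have hmap : (μ.restrict A).map Y = c • ν.map Y := by
    refine Measure.ext_of_singleton fun y => ?_
    rw [Measure.map_apply hY (.singleton y), Measure.restrict_apply (hY (.singleton y)),
      Measure.smul_apply, Measure.map_apply hY (.singleton y), smul_eq_mul, inter_comm]
    by_cases hy : y ∈ range Y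
    · exact h y hy
    · simp [preimage_singleton_eq_empty.2 hy]
  have hB := DFunLike.congr_fun hmap B
  rwa [Measure.map_apply hY .of_discrete, Measure.restrict_apply (hY .of_discrete),
    Measure.smul_apply, Measure.map_apply hY .of_discrete, smul_eq_mul, inter_comm] at hB

theorem mpMeasure_inter_fiber {Ω E : Type*} {mΩ : MeasurableSpace Ω} (P : Measure Ω)
    [IsFiniteMeasure P] (ℱ : ℕ → MeasurableSpace Ω) (Y : Ω → E) {m : ℕ} (y : E)
    (hle : ℱ m ≤ mΩ) (hfib : MeasurableSet {ω | Y ω = y})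
    (hη : ∀ᵐ ω ∂P, 0 < condDensity P ℱ Y m y ω) {A : Set Ω} (hA : MeasurableSet[ℱ m] A) :
    mpMeasure P ℱ Y m (A ∩ {ω | Y ω = y}) = P A * P {ω | Y ω = y} := by
  set t := {ω | Y ω = y}
  set g : Ω → ℝ≥0∞ := fun ω => ENNReal.ofReal (condDensity P ℱ Y m y ω)⁻¹
  have hg : Measurable[ℱ m] g :=
    (stronglyMeasurable_condExp.measurable.div_const _).inv.ennreal_ofReal
  have hAt : MeasurableSet (A ∩ t) := (hle A hA).inter hfib
  have hcancel : ∀ᵐ ω ∂P,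
      A.indicator g ω * P⁻[t.indicator 1|ℱ m] ω = A.indicator (fun _ => P t) ω := by
    filter_upwards [hη, condLExp_indicator_one_ae_eq (m := ℱ m) hfib] with ω hηω hω
    by_cases hωA : ω ∈ A
    · have hc : P[t.indicator (fun _ => (1 : ℝ))|ℱ m] ω ≠ 0 := by
        rintro hc
        simp [condDensity, t, hc] at hηω
      simp only [indicator_of_mem hωA, hω, g]
      rw [← ENNReal.ofReal_mul (inv_nonneg.2 hηω.le), condDensity, inv_div,
        div_mul_cancel₀ _ hc]
      exact ENNReal.ofReal_toReal (measure_ne_top P t)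
    · simp [hωA]
  calc mpMeasure P ℱ Y m (A ∩ t) = ∫⁻ ω in A ∩ t, g ω ∂P := by
        rw [mpMeasure, withDensity_apply _ hAt]
        exact setLIntegral_congr_fun hAt fun ω hω => by rw [hω.2]
    _ = ∫⁻ ω, A.indicator g ω * t.indicator 1 ω ∂P := by
        rw [← lintegral_indicator hAt]
        simp_rw [← inter_indicator_mul, Pi.one_apply, mul_one]
    _ = ∫⁻ ω, A.indicator g ω * P⁻[t.indicator 1|ℱ m] ω ∂P :=
        (lintegral_mul_condLExp hle (hg.indicator hA) (measurable_one.indicator hfib)).symm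
    _ = P A * P t := by
        rw [lintegral_congr_ae hcancel, lintegral_indicator_const (hle A hA), mul_comm]

theorem stmt2_general {Ω E : Type*} {mΩ : MeasurableSpace Ω} [Countable E]
    (P : Measure Ω) [IsProbabilityMeasure P] (n : ℕ)
    (ℱ : ℕ → MeasurableSpace Ω) (hle : ∀ m, ℱ m ≤ mΩ)
    (Y : Ω → E) (hY : @Measurable Ω E (ℱ n) ⊤ Y)
    (hη : ∀ m, m < n → ∀ y ∈ Set.range Y, ∀ᵐ ω ∂P, 0 < condDensity P ℱ Y m y ω) :
    ∀ m, m < n →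
      ProbabilityTheory.Indep (ℱ m) (MeasurableSpace.comap Y ⊤) (mpMeasure P ℱ Y m) ∧
      ∀ A : Set Ω, MeasurableSet[ℱ m] A → ∀ B : Set E,
        mpMeasure P ℱ Y m (A ∩ Y ⁻¹' B) = P A * P (Y ⁻¹' B) ∧
        mpMeasure P ℱ Y m (A ∩ Y ⁻¹' B) =
          mpMeasure P ℱ Y m A * mpMeasure P ℱ Y m (Y ⁻¹' B) := by
  intro m hm
  let _ : MeasurableSpace E := ⊤
  have hYm : Measurable Y := hY.mono (hle n) le_rfl
  have hprod : ∀ A, MeasurableSet[ℱ m] A → ∀ B,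
      mpMeasure P ℱ Y m (A ∩ Y ⁻¹' B) = P A * P (Y ⁻¹' B) := fun A hA =>
    measure_inter_preimage_eq_mul_of_fiber hYm fun y hy =>
      mpMeasure_inter_fiber P ℱ Y y (hle m) (hYm (.singleton y)) (hη m hm y hy) hA
  have hindep : ∀ A, MeasurableSet[ℱ m] A → ∀ B, mpMeasure P ℱ Y m (A ∩ Y ⁻¹' B) =
      mpMeasure P ℱ Y m A * mpMeasure P ℱ Y m (Y ⁻¹' B) := fun A hA B => by
    have hPA := hprod A hA univ
    have hPB := hprod univ .univ B
    simp only [preimage_univ, inter_univ, univ_inter, measure_univ, mul_one, one_mul] at hPA hPB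
    rw [hprod A hA B, hPA, hPB]
  refine ⟨(ProbabilityTheory.Indep_iff _ _ _).2 ?_, fun A hA B => ⟨hprod A hA B, hindep A hA B⟩⟩
  rintro A _ hA ⟨B, -, rfl⟩
  exact hindep A hA B

/-- Under the martingale preserving measure `\tilde P_m`, the σ-algebras `ℱ m` and `σ(Y)`
are independent, and `\tilde P_m[A ∩ {Y ∈ B}] = P[A]·P[Y ∈ B] = \tilde P_m[A]·\tilde P_m[Y ∈ B]`. -/
theorem stmt2 {Ω E : Type*} {mΩ : MeasurableSpace Ω} [Countable E]
    (P : Measure Ω) [IsProbabilityMeasure P] (n : ℕ)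
    (ℱ : ℕ → MeasurableSpace Ω) (hmono : Monotone ℱ) (hle : ∀ m, ℱ m ≤ mΩ)
    (Y : Ω → E) (hY : @Measurable Ω E (ℱ n) ⊤ Y)
    (hYpos : ∀ y ∈ Set.range Y, 0 < P {ω | Y ω = y})
    (hη : ∀ m, m < n → ∀ y ∈ Set.range Y, ∀ᵐ ω ∂P, 0 < condDensity P ℱ Y m y ω) :
    ∀ m, m < n →
      ProbabilityTheory.Indep (ℱ m) (MeasurableSpace.comap Y ⊤) (mpMeasure P ℱ Y m) ∧
      ∀ A : Set Ω, MeasurableSet[ℱ m] A → ∀ B : Set E,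
        mpMeasure P ℱ Y m (A ∩ Y ⁻¹' B) = P A * P (Y ⁻¹' B) ∧
        mpMeasure P ℱ Y m (A ∩ Y ⁻¹' B) =
          mpMeasure P ℱ Y m A * mpMeasure P ℱ Y m (Y ⁻¹' B) :=
  stmt2_general P n ℱ hle Y hY hη
end

section
/- Under the stated assumptions, for every 0 ≤ m < n the restriction of the martingale preserving measure \tilde P_m to the σ-algebra F_m coincides with the restriction of P to F_m; consequently, the law under \tilde P_m of any F-adapted process (X_l)_{0 ≤ l ≤ m} equals its law under P. -/
/-!
For `A ∈ ℱ m`, split `∫_A (η_m^Y)⁻¹ dP` along the fibres `{Y = y}`. On each fibre the integrand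
is the `ℱ m`-measurable `(η_m^y)⁻¹`, so the indicator of `{Y = y}` may be replaced by its
conditional expectation `P[Y = y | ℱ m] = P[Y = y] η_m^y`; this cancels the density and leaves
`P[Y = y] P(A)`, which sums to `P(A)`. Laws of `ℱ m`-measurable maps only see the restriction
to `ℱ m`.
-/

open MeasureTheory Filter Set

open scoped ENNReal

section

variable {Ω : Type*} {m mΩ : MeasurableSpace Ω} {μ : Measure Ω}

theorem trim_withDensity_ofReal_eq_withDensity_condExp (hm : m ≤ mΩ) [SigmaFinite (μ.trim hm)]
    {f : Ω → ℝ} (hf : Integrable f μ) (hf_nonneg : 0 ≤ᵐ[μ] f) :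
    (μ.withDensity fun ω => ENNReal.ofReal (f ω)).trim hm =
      (μ.trim hm).withDensity fun ω => ENNReal.ofReal (μ[f | m] ω) := by
  have hcond_meas : Measurable[m] fun ω => ENNReal.ofReal (μ[f | m] ω) :=
    stronglyMeasurable_condExp.measurable.ennreal_ofReal
  refine @Measure.ext Ω m _ _ fun s hs => ?_
  rw [trim_measurableSet_eq hm hs, withDensity_apply _ (hm s hs), withDensity_apply _ hs,
    setLIntegral_trim hm hcond_meas hs,
    ← ofReal_integral_eq_lintegral_ofReal hf.restrict (ae_restrict_of_ae hf_nonneg),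
    ← ofReal_integral_eq_lintegral_ofReal integrable_condExp.restrict
      (ae_restrict_of_ae (condExp_nonneg hf_nonneg)),
    setIntegral_condExp hm hf hs]

theorem trim_restrict_eq_withDensity_condExp_indicator (hm : m ≤ mΩ) [SigmaFinite (μ.trim hm)]
    {B : Set Ω} (hB : MeasurableSet B) (hμB : μ B ≠ ∞) :
    (μ.restrict B).trim hm =
      (μ.trim hm).withDensity fun ω =>
        ENNReal.ofReal (μ[B.indicator (fun _ => (1 : ℝ)) | m] ω) := by
  have hind : Integrable (B.indicator fun _ => (1 : ℝ)) μ :=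
    (integrable_indicator_iff hB).2 (integrableOn_const hμB)
  rw [← trim_withDensity_ofReal_eq_withDensity_condExp hm hind
      (Eventually.of_forall (indicator_nonneg fun _ _ => zero_le_one)),
    ← withDensity_indicator_one hB]
  congr 2 with ω
  by_cases hω : ω ∈ B <;> simp [hω]

theorem setLIntegral_inter_eq_setLIntegral_condExp_indicator_mul (hm : m ≤ mΩ)
    [SigmaFinite (μ.trim hm)] {B : Set Ω} (hB : MeasurableSet B) (hμB : μ B ≠ ∞)
    {s : Set Ω} (hs : MeasurableSet[m] s) {g : Ω → ℝ≥0∞} (hg : Measurable[m] g) :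
    ∫⁻ ω in s ∩ B, g ω ∂μ =
      ∫⁻ ω in s, ENNReal.ofReal (μ[B.indicator (fun _ => (1 : ℝ)) | m] ω) * g ω ∂μ := by
  have hcond_meas :
      Measurable[m] fun ω => ENNReal.ofReal (μ[B.indicator (fun _ => (1 : ℝ)) | m] ω) :=
    stronglyMeasurable_condExp.measurable.ennreal_ofReal
  rw [← Measure.restrict_restrict (hm s hs), ← setLIntegral_trim hm hg hs,
    trim_restrict_eq_withDensity_condExp_indicator hm hB hμB,
    setLIntegral_withDensity_eq_setLIntegral_mul _ hcond_meas hg hs,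
    setLIntegral_trim hm (hcond_meas.mul hg) hs]
  rfl

theorem setLIntegral_inter_ofReal_inv_condExp_indicator_div (hm : m ≤ mΩ) [IsFiniteMeasure μ]
    {B : Set Ω} (hB : MeasurableSet B) {s : Set Ω} (hs : MeasurableSet[m] s)
    (hpos : ∀ᵐ ω ∂μ, 0 < μ[B.indicator (fun _ => (1 : ℝ)) | m] ω / (μ B).toReal) :
    ∫⁻ ω in s ∩ B, ENNReal.ofReal ((μ[B.indicator (fun _ => (1 : ℝ)) | m] ω / (μ B).toReal)⁻¹) ∂μ
      = μ B * μ s := by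
  rcases eq_or_ne (μ B) 0 with hB0 | hB0
  · rw [hB0, zero_mul]
    exact setLIntegral_measure_zero _ _ (measure_mono_null inter_subset_right hB0)
  have hp : 0 < (μ B).toReal := ENNReal.toReal_pos hB0 (measure_ne_top _ _)
  have hcancel : ∀ᵐ ω ∂μ, ENNReal.ofReal (μ[B.indicator (fun _ => (1 : ℝ)) | m] ω) *
      ENNReal.ofReal ((μ[B.indicator (fun _ => (1 : ℝ)) | m] ω / (μ B).toReal)⁻¹) = μ B := by
    filter_upwards [hpos] with ω hω
    have hc := (div_pos_iff_of_pos_right hp).1 hω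
    rw [← ENNReal.ofReal_mul hc.le, inv_div, mul_div_cancel₀ _ hc.ne',
      ENNReal.ofReal_toReal (measure_ne_top _ _)]
  rw [setLIntegral_inter_eq_setLIntegral_condExp_indicator_mul hm hB (measure_ne_top _ _) hs
      (g := fun ω => ENNReal.ofReal ((μ[B.indicator (fun _ => (1 : ℝ)) | m] ω / (μ B).toReal)⁻¹))
      (stronglyMeasurable_condExp.measurable.div_const _).inv.ennreal_ofReal,
    lintegral_congr_ae (ae_restrict_of_ae hcancel), setLIntegral_const]

theorem lintegral_eq_tsum_setLIntegral_fiber {E : Type*} [Countable E] {Y : Ω → E}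
    (hY : ∀ y, MeasurableSet {ω | Y ω = y}) (f : E → Ω → ℝ≥0∞) :
    ∫⁻ ω, f (Y ω) ω ∂μ = ∑' y, ∫⁻ ω in {ω | Y ω = y}, f y ω ∂μ := by
  have hcover : (⋃ y, {ω | Y ω = y}) = univ := iUnion_eq_univ_iff.2 fun ω => ⟨Y ω, rfl⟩
  rw [← setLIntegral_univ, ← hcover,
    lintegral_iUnion (s := fun y => {ω | Y ω = y}) hY (pairwise_disjoint_fiber Y)]
  exact tsum_congr fun y => setLIntegral_congr_fun (hY y) fun ω (hω : Y ω = y) => by rw [hω]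

theorem tsum_measure_fiber {E : Type*} [Countable E] {Y : Ω → E}
    (hY : ∀ y, MeasurableSet {ω | Y ω = y}) : ∑' y, μ {ω | Y ω = y} = μ univ := by
  simpa using (lintegral_eq_tsum_setLIntegral_fiber (μ := μ) hY fun _ _ => 1).symm

theorem map_eq_map_of_trim_eq {β : Type*} [MeasurableSpace β] {ν : Measure Ω} (hm : m ≤ mΩ)
    (h : μ.trim hm = ν.trim hm) {f : Ω → β}
    (hf : Measurable[m] f) : μ.map f = ν.map f := by
  ext s hs
  rw [Measure.map_apply (hf.mono hm le_rfl) hs, Measure.map_apply (hf.mono hm le_rfl) hs,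
    ← trim_measurableSet_eq hm (hf hs), h, trim_measurableSet_eq hm (hf hs)]

end

theorem mpMeasure_trim_eq {Ω E : Type*} {mΩ : MeasurableSpace Ω} [Countable E] (P : Measure Ω)
    [IsProbabilityMeasure P] (ℱ : ℕ → MeasurableSpace Ω) (Y : Ω → E) {m : ℕ} (hle : ℱ m ≤ mΩ)
    (hY : ∀ y, MeasurableSet {ω | Y ω = y})
    (hη : ∀ y ∈ range Y, ∀ᵐ ω ∂P, 0 < condDensity P ℱ Y m y ω) :
    (mpMeasure P ℱ Y m).trim hle = P.trim hle := by
  refine @Measure.ext Ω (ℱ m) _ _ fun s hs => ?_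
  have hfiber : ∀ y, ∫⁻ ω in s ∩ {ω | Y ω = y}, ENNReal.ofReal (condDensity P ℱ Y m y ω)⁻¹ ∂P
      = P {ω | Y ω = y} * P s := by
    intro y
    by_cases hy : y ∈ range Y
    · exact setLIntegral_inter_ofReal_inv_condExp_indicator_div hle (hY y) hs (hη y hy)
    · have hempty : {ω | Y ω = y} = ∅ := eq_empty_iff_forall_notMem.2 fun ω hω => hy ⟨ω, hω⟩
      simp [hempty]
  calc (mpMeasure P ℱ Y m).trim hle s
      = ∫⁻ ω in s, ENNReal.ofReal (condDensity P ℱ Y m (Y ω) ω)⁻¹ ∂P := by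
        rw [trim_measurableSet_eq hle hs, mpMeasure, withDensity_apply _ (hle s hs)]
    _ = ∑' y, ∫⁻ ω in s ∩ {ω | Y ω = y}, ENNReal.ofReal (condDensity P ℱ Y m y ω)⁻¹ ∂P := by
        rw [lintegral_eq_tsum_setLIntegral_fiber (μ := P.restrict s) hY
          fun y ω => ENNReal.ofReal (condDensity P ℱ Y m y ω)⁻¹]
        simp only [Measure.restrict_restrict (hY _), inter_comm]
    _ = P.trim hle s := by
        rw [tsum_congr hfiber, ENNReal.tsum_mul_right, tsum_measure_fiber hY, measure_univ,
          one_mul, trim_measurableSet_eq hle hs]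

theorem stmt3_general {Ω E : Type*} {mΩ : MeasurableSpace Ω} [Countable E]
    (P : Measure Ω) [IsProbabilityMeasure P] (n : ℕ)
    (ℱ : ℕ → MeasurableSpace Ω) (hmono : Monotone ℱ) (hle : ∀ m, ℱ m ≤ mΩ)
    (Y : Ω → E) (hY : @Measurable Ω E (ℱ n) ⊤ Y)
    (hη : ∀ m, m < n → ∀ y ∈ Set.range Y, ∀ᵐ ω ∂P, 0 < condDensity P ℱ Y m y ω) :
    ∀ m, m < n →
      (mpMeasure P ℱ Y m).trim (hle m) = P.trim (hle m) ∧
      ∀ X : ℕ → Ω → ℝ, (∀ l, l ≤ m → Measurable[ℱ l] (X l)) →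
        Measure.map (fun ω (l : Fin (m + 1)) => X l ω) (mpMeasure P ℱ Y m) =
          Measure.map (fun ω (l : Fin (m + 1)) => X l ω) P := by
  intro m hm
  have hfiber : ∀ y, MeasurableSet {ω | Y ω = y} := fun y => hle n _ (hY (t := {y}) trivial)
  have htrim := mpMeasure_trim_eq P ℱ Y (hle m) hfiber (hη m hm)
  refine ⟨htrim, fun X hX => map_eq_map_of_trim_eq (hle m) htrim ?_⟩
  exact @measurable_pi_lambda Ω (Fin (m + 1)) (fun _ => ℝ) (ℱ m) _ _ fun l =>
    (hX l (Nat.lt_succ_iff.1 l.isLt)).mono (hmono (Nat.lt_succ_iff.1 l.isLt)) le_rfl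

/-- The restriction of the martingale preserving measure `\tilde P_m` to `ℱ m` coincides with
that of `P`; consequently the law under `\tilde P_m` of any `ℱ`-adapted process
`(X_l)_{0 ≤ l ≤ m}` equals its law under `P`. -/
theorem stmt3 {Ω E : Type*} {mΩ : MeasurableSpace Ω} [Countable E]
    (P : Measure Ω) [IsProbabilityMeasure P] (n : ℕ)
    (ℱ : ℕ → MeasurableSpace Ω) (hmono : Monotone ℱ) (hle : ∀ m, ℱ m ≤ mΩ)
    (Y : Ω → E) (hY : @Measurable Ω E (ℱ n) ⊤ Y)
    (hYpos : ∀ y ∈ Set.range Y, 0 < P {ω | Y ω = y})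
    (hη : ∀ m, m < n → ∀ y ∈ Set.range Y, ∀ᵐ ω ∂P, 0 < condDensity P ℱ Y m y ω) :
    ∀ m, m < n →
      (mpMeasure P ℱ Y m).trim (hle m) = P.trim (hle m) ∧
      ∀ X : ℕ → Ω → ℝ, (∀ l, l ≤ m → Measurable[ℱ l] (X l)) →
        Measure.map (fun ω (l : Fin (m + 1)) => X l ω) (mpMeasure P ℱ Y m) =
          Measure.map (fun ω (l : Fin (m + 1)) => X l ω) P :=
  stmt3_general P n ℱ hmono hle Y hY hη
end
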